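/- Let H be a complex Hilbert space and let E(H) be the set of effects on H. Define on E(H): E ⊕ F := E + F if E + F ∈ E(H), and E ⊕ F := 1 otherwise; E* := 1 − E; E ⊙ F := (E* ⊕ F*)*; and E ⩀ F := (E ⊕ F*) ⊙ F. Then (E(H), ⊕, *, 1, 0) is a QMV-algebra, i.e. for all effects a, b, c: (QMV1) a ⊕ (b ⊕ c) = (b ⊕ a) ⊕ c; (QMV2) a ⊕ a* = 1; (QMV3) a ⊕ 0 = a; (QMV4) a ⊕ 1 = 1; (QMV5) a** = a; (QMV6) 0* = 1; (QMV7) a ⊕ ((a* ⩀ b) ⩀ (c ⩀ a*)) = (a ⊕ b) ⩀ (a ⊕ c). -/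

import Mathlib

open scoped ComplexOrder

variable {H : Type*} [NormedAddCommGroup H] [InnerProductSpace ℂ H] [CompleteSpace H]

/-- An effect on a complex Hilbert space `H`: a continuous linear operator `E`
such that both `E` and `1 - E` are positive. -/
def IsEffect (E : H →L[ℂ] H) : Prop :=
  (∀ x : H, 0 ≤ (inner ℂ (E x) x : ℂ)) ∧ (∀ x : H, 0 ≤ (inner ℂ ((1 - E) x) x : ℂ))

/-- The set `E(H)` of effects on `H`. -/
def Effect (H : Type*) [NormedAddCommGroup H] [InnerProductSpace ℂ H]
    [CompleteSpace H] : Type _ :=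
  {E : H →L[ℂ] H // IsEffect E}

/-- The effect `1` (the identity operator). -/
def effectOne : Effect H :=
  ⟨1, ⟨fun x => by
        simp only [ContinuousLinearMap.one_apply]
        rw [inner_self_eq_norm_sq_to_K]
        positivity,
      fun x => by simp⟩⟩

/-- The effect `0` (the zero operator). -/
def effectZero : Effect H :=
  ⟨0, ⟨fun x => by simp,
      fun x => by
        simp only [sub_zero, ContinuousLinearMap.one_apply]
        rw [inner_self_eq_norm_sq_to_K]
        positivity⟩⟩

open Classical in
/-- The truncated sum `E ⊕ F` on effects. -/
noncomputable def qadd (a b : Effect H) : Effect H :=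
  if h : IsEffect (a.1 + b.1) then ⟨a.1 + b.1, h⟩ else effectOne

/-- The generalized complement `E* = 1 - E` on effects. -/
def qstar (a : Effect H) : Effect H :=
  ⟨1 - a.1, ⟨a.2.2, by simpa [sub_sub_cancel] using a.2.1⟩⟩

/-- `E ⊙ F := (E* ⊕ F*)*`. -/
noncomputable def qodot (a b : Effect H) : Effect H :=
  qstar (qadd (qstar a) (qstar b))

/-- `E ⩀ F := (E ⊕ F*) ⊙ F`. -/
noncomputable def qet (a b : Effect H) : Effect H :=
  qodot (qadd a (qstar b)) b

section Helpers

/-- Loewner order on effects. -/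
def Lle (a b : Effect H) : Prop := ∀ x : H, 0 ≤ (inner ℂ ((b.1 - a.1) x) x : ℂ)

lemma effect_ext {a b : Effect H} (h : a.1 = b.1) : a = b := Subtype.ext h

lemma Lle_antisymm {a b : Effect H} (h1 : Lle a b) (h2 : Lle b a) : a = b := by
  apply effect_ext
  have hz : ∀ x : H, (inner ℂ ((b.1 - a.1) x) x : ℂ) = 0 := by
    intro x
    have h2' : (inner ℂ ((b.1 - a.1) x) x : ℂ) ≤ 0 := by
      have h2x := h2 x
      have he : (a.1 - b.1 : H →L[ℂ] H) = -(b.1 - a.1) := by abel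
      rw [he] at h2x
      simpa only [ContinuousLinearMap.neg_apply, inner_neg_left, neg_nonneg] using h2x
    exact le_antisymm h2' (h1 x)
  have hL : ((b.1 - a.1 : H →L[ℂ] H) : H →ₗ[ℂ] H) = 0 := by
    rw [← inner_map_self_eq_zero]
    intro x
    simpa [inner_sub_left] using hz x
  have hba : (b.1 - a.1 : H →L[ℂ] H) = 0 := by
    ext x
    have := congrArg (fun f : H →ₗ[ℂ] H => f x) hL
    simpa using this
  exact (sub_eq_zero.mp hba).symm

lemma Lle_trans {a b c : Effect H} (h1 : Lle a b) (h2 : Lle b c) : Lle a c := by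
  intro x
  have he : (c.1 - a.1 : H →L[ℂ] H) = (c.1 - b.1) + (b.1 - a.1) := by abel
  rw [he, ContinuousLinearMap.add_apply, inner_add_left]
  exact add_nonneg (h2 x) (h1 x)

lemma Lle_refl (a : Effect H) : Lle a a := by
  intro x; simp

lemma Lle_one (a : Effect H) : Lle a effectOne := by
  intro x
  simpa [effectOne] using a.2.2 x

lemma Lle_congr {a b c d : Effect H} (h : (b.1 - a.1 : H →L[ℂ] H) = d.1 - c.1) :
    Lle a b ↔ Lle c d := by
  unfold Lle; rw [h]

lemma isEffect_congr {E F : H →L[ℂ] H} (h : E = F) : IsEffect E ↔ IsEffect F := by rw [h]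

lemma pos_add {E F : H →L[ℂ] H} (hE : ∀ x : H, 0 ≤ (inner ℂ (E x) x : ℂ))
    (hF : ∀ x : H, 0 ≤ (inner ℂ (F x) x : ℂ)) : ∀ x : H, 0 ≤ (inner ℂ ((E + F) x) x : ℂ) := by
  intro x
  rw [ContinuousLinearMap.add_apply, inner_add_left]
  exact add_nonneg (hE x) (hF x)

/-- `a + b` is an effect iff `b ≤ a*`. -/
lemma isEffect_add_iff (a b : Effect H) : IsEffect (a.1 + b.1) ↔ Lle b (qstar a) := by
  constructor
  · intro h x
    have := h.2 x
    have he : ((qstar a).1 - b.1 : H →L[ℂ] H) = 1 - (a.1 + b.1) := by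
      simp only [qstar]; abel
    rw [he]
    exact this
  · intro h
    refine ⟨pos_add a.2.1 b.2.1, fun x => ?_⟩
    have he : (1 - (a.1 + b.1) : H →L[ℂ] H) = (qstar a).1 - b.1 := by
      simp only [qstar]; abel
    rw [he]
    exact h x

lemma qadd_pos {a b : Effect H} (h : IsEffect (a.1 + b.1)) : qadd a b = ⟨a.1 + b.1, h⟩ := by
  simp [qadd, h]; rfl

lemma qadd_neg {a b : Effect H} (h : ¬ IsEffect (a.1 + b.1)) : qadd a b = effectOne := by
  simp [qadd, h]

/-- `qet a b = a` when `a ≤ b`. -/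
lemma qet_left {a b : Effect H} (h : Lle a b) : qet a b = a := by
  have h1 : IsEffect (a.1 + (qstar b).1) := by
    rw [isEffect_add_iff]
    intro x
    have he : ((qstar a).1 - (qstar b).1 : H →L[ℂ] H) = b.1 - a.1 := by
      simp only [qstar]; abel
    rw [he]; exact h x
  erw [qet, qadd_pos h1, qodot]
  have h2 : IsEffect ((qstar (⟨a.1 + (qstar b).1, h1⟩ : Effect H)).1 + (qstar b).1) := by
    have he : ((qstar (⟨a.1 + (qstar b).1, h1⟩ : Effect H)).1 + (qstar b).1 : H →L[ℂ] H)
        = (qstar a).1 := by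
      simp only [qstar]; abel
    rw [he]; exact (qstar a).2
  rw [qadd_pos h2]
  apply effect_ext
  simp only [qstar]
  abel

/-- `qet a b = b` when `¬ a ≤ b`. -/
lemma qet_right {a b : Effect H} (h : ¬ Lle a b) : qet a b = b := by
  have h1 : ¬ IsEffect (a.1 + (qstar b).1) := by
    intro hE
    apply h
    intro x
    have h2 := hE.2 x
    have he : (1 - (a.1 + (qstar b).1) : H →L[ℂ] H) = b.1 - a.1 := by
      simp only [qstar]; abel
    rw [he] at h2
    exact h2
  rw [qet, qadd_neg h1, qodot]
  have h2 : IsEffect ((qstar (effectOne : Effect H)).1 + (qstar b).1) := by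
    have he : ((qstar (effectOne : Effect H)).1 + (qstar b).1 : H →L[ℂ] H) = (qstar b).1 := by
      simp only [qstar, effectOne]; abel
    rw [he]; exact (qstar b).2
  rw [qadd_pos h2]
  apply effect_ext
  simp only [qstar, effectOne]
  abel

/-- QMV2. -/
lemma qadd_qstar_self (a : Effect H) : qadd a (qstar a) = effectOne := by
  have he : (a.1 + (qstar a).1 : H →L[ℂ] H) = 1 := by simp only [qstar]; abel
  have h : IsEffect (a.1 + (qstar a).1) := by
    rw [isEffect_congr he]; exact (effectOne : Effect H).2
  rw [qadd_pos h]
  exact effect_ext he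

/-- QMV4. -/
lemma qadd_one (a : Effect H) : qadd a effectOne = effectOne := by
  by_cases h : IsEffect (a.1 + (effectOne : Effect H).1)
  · rw [qadd_pos h]
    apply effect_ext
    have hz : ∀ x : H, (inner ℂ (a.1 x) x : ℂ) = 0 := by
      intro x
      have h2 := h.2 x
      have he : (1 - (a.1 + (effectOne : Effect H).1) : H →L[ℂ] H) = -a.1 := by
        simp only [effectOne]; abel
      rw [he] at h2
      simp only [ContinuousLinearMap.neg_apply, inner_neg_left, neg_nonneg] at h2
      exact le_antisymm h2 (a.2.1 x)
    have hL : ((a.1 : H →L[ℂ] H) : H →ₗ[ℂ] H) = 0 := by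
      rw [← inner_map_self_eq_zero]
      intro x
      simpa using hz x
    have ha : a.1 = 0 := by
      ext x
      have := congrArg (fun f : H →ₗ[ℂ] H => f x) hL
      simpa using this
    simp [ha, effectOne]
  · exact qadd_neg h

lemma qadd_comm (a b : Effect H) : qadd a b = qadd b a := by
  by_cases h : IsEffect (a.1 + b.1)
  · have h' : IsEffect (b.1 + a.1) := by rwa [isEffect_congr (add_comm _ _)]
    rw [qadd_pos h, qadd_pos h']
    exact effect_ext (add_comm _ _)
  · have h' : ¬ IsEffect (b.1 + a.1) := by
      intro hE; exact h (by rwa [isEffect_congr (add_comm _ _)])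
    rw [qadd_neg h, qadd_neg h']

lemma one_qadd (a : Effect H) : qadd effectOne a = effectOne := by
  rw [qadd_comm]; exact qadd_one a

lemma qet_one_left (y : Effect H) : qet effectOne y = y := by
  by_cases h : Lle effectOne y
  · rw [qet_left h]; exact Lle_antisymm h (Lle_one y)
  · exact qet_right h

end Helpers

set_option maxHeartbeats 2000000 in
/-- `(E(H), ⊕, *, 1, 0)` is a QMV-algebra. -/
theorem stmt_16 (a b c : Effect H) :
    qadd a (qadd b c) = qadd (qadd b a) c ∧
    qadd a (qstar a) = (effectOne : Effect H) ∧
    qadd a (effectZero : Effect H) = a ∧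
    qadd a effectOne = (effectOne : Effect H) ∧
    qstar (qstar a) = a ∧
    qstar (effectZero : Effect H) = effectOne ∧
    qadd a (qet (qet (qstar a) b) (qet c (qstar a))) =
      qet (qadd a b) (qadd a c) := by
  refine ⟨?_, qadd_qstar_self a, ?_, qadd_one a, ?_, ?_, ?_⟩
  · -- QMV1
    by_cases hbc : IsEffect (b.1 + c.1)
    · rw [qadd_pos hbc]
      by_cases hT : IsEffect (a.1 + (b.1 + c.1))
      · have hba : IsEffect (b.1 + a.1) := by
          refine ⟨pos_add b.2.1 a.2.1, fun x => ?_⟩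
          have he : (1 - (b.1 + a.1) : H →L[ℂ] H) = (1 - (a.1 + (b.1 + c.1))) + c.1 := by abel
          rw [he]; exact pos_add hT.2 c.2.1 x
        have hT2 : IsEffect ((b.1 + a.1) + c.1) := by
          rwa [isEffect_congr (show ((b.1 + a.1) + c.1 : H →L[ℂ] H) = a.1 + (b.1 + c.1) by abel)]
        rw [qadd_pos (a := a) (b := ⟨b.1 + c.1, hbc⟩) hT, qadd_pos hba,
          qadd_pos (a := ⟨b.1 + a.1, hba⟩) (b := c) hT2]
        exact effect_ext (by dsimp only; abel)
      · rw [qadd_neg (a := a) (b := ⟨b.1 + c.1, hbc⟩) hT]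
        by_cases hba : IsEffect (b.1 + a.1)
        · rw [qadd_pos hba]
          have hT2 : ¬ IsEffect ((b.1 + a.1) + c.1) := by
            intro hE
            exact hT (by rwa [isEffect_congr
              (show ((b.1 + a.1) + c.1 : H →L[ℂ] H) = a.1 + (b.1 + c.1) by abel)] at hE)
          rw [qadd_neg (a := ⟨b.1 + a.1, hba⟩) (b := c) hT2]
        · rw [qadd_neg hba, one_qadd]
    · rw [qadd_neg hbc, qadd_one]
      by_cases hba : IsEffect (b.1 + a.1)
      · rw [qadd_pos hba]
        have hT2 : ¬ IsEffect ((b.1 + a.1) + c.1) := by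
          intro hE
          apply hbc
          refine ⟨pos_add b.2.1 c.2.1, fun x => ?_⟩
          have he : (1 - (b.1 + c.1) : H →L[ℂ] H) = (1 - ((b.1 + a.1) + c.1)) + a.1 := by abel
          rw [he]; exact pos_add hE.2 a.2.1 x
        rw [qadd_neg (a := ⟨b.1 + a.1, hba⟩) (b := c) hT2]
      · rw [qadd_neg hba, one_qadd]
  · -- QMV3
    have he : (a.1 + (effectZero : Effect H).1 : H →L[ℂ] H) = a.1 := by
      simp only [effectZero]; abel
    have h : IsEffect (a.1 + (effectZero : Effect H).1) := by
      rw [isEffect_congr he]; exact a.2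
    rw [qadd_pos h]
    exact effect_ext he
  · -- QMV5
    apply effect_ext
    simp only [qstar, sub_sub_cancel]
  · -- QMV6
    apply effect_ext
    simp only [qstar, effectZero, effectOne, sub_zero]
  · -- QMV7
    by_cases hb : Lle b (qstar a)
    · by_cases hc : Lle c (qstar a)
      · -- Case A
        have heb : IsEffect (a.1 + b.1) := (isEffect_add_iff a b).2 hb
        have hec : IsEffect (a.1 + c.1) := (isEffect_add_iff a c).2 hc
        rw [qadd_pos heb, qadd_pos hec]
        have hw : qet (qet (qstar a) b) (qet c (qstar a)) = qet b c := by
          rw [qet_left hc]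
          by_cases hxb : Lle (qstar a) b
          · rw [qet_left hxb, Lle_antisymm hxb hb]
          · rw [qet_right hxb]
        rw [hw]
        have hiff : Lle (⟨a.1 + b.1, heb⟩ : Effect H) (⟨a.1 + c.1, hec⟩ : Effect H) ↔
            Lle b c := Lle_congr (by dsimp only; abel)
        by_cases hbc : Lle b c
        · rw [qet_left hbc, qet_left (hiff.2 hbc), qadd_pos heb]
        · rw [qet_right hbc, qet_right (fun h => hbc (hiff.1 h)), qadd_pos hec]
      · -- Case B
        have heb : IsEffect (a.1 + b.1) := (isEffect_add_iff a b).2 hb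
        have hecn : ¬ IsEffect (a.1 + c.1) := fun h => hc ((isEffect_add_iff a c).1 h)
        erw [qadd_pos heb, qadd_neg hecn, qet_left (Lle_one (⟨a.1 + b.1, heb⟩ : Effect H)), qet_right hc]
        have hu : qet (qstar a) b = b := by
          by_cases hxb : Lle (qstar a) b
          · rw [qet_left hxb]; exact Lle_antisymm hxb hb
          · exact qet_right hxb
        rw [hu, qet_left hb, qadd_pos heb]
    · by_cases hc : Lle c (qstar a)
      · -- Case C
        have hebn : ¬ IsEffect (a.1 + b.1) := fun h => hb ((isEffect_add_iff a b).1 h)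
        have hec : IsEffect (a.1 + c.1) := (isEffect_add_iff a c).2 hc
        erw [qadd_neg hebn, qadd_pos hec, qet_one_left (⟨a.1 + c.1, hec⟩ : Effect H)]
        have hw : qet (qet (qstar a) b) (qet c (qstar a)) = c := by
          rw [qet_left hc]
          by_cases hxb : Lle (qstar a) b
          · rw [qet_left hxb]
            by_cases hxc : Lle (qstar a) c
            · rw [qet_left hxc]; exact Lle_antisymm hxc hc
            · exact qet_right hxc
          · rw [qet_right hxb]
            exact qet_right (fun h => hb (Lle_trans h hc))
        rw [hw, qadd_pos hec]
      · -- Case D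
        have hebn : ¬ IsEffect (a.1 + b.1) := fun h => hb ((isEffect_add_iff a b).1 h)
        have hecn : ¬ IsEffect (a.1 + c.1) := fun h => hc ((isEffect_add_iff a c).1 h)
        rw [qadd_neg hebn, qadd_neg hecn, qet_one_left]
        have hw : qet (qet (qstar a) b) (qet c (qstar a)) = qstar a := by
          rw [qet_right hc]
          by_cases hxb : Lle (qstar a) b
          · rw [qet_left hxb]
            exact qet_left (Lle_refl _)
          · rw [qet_right hxb]
            exact qet_right hb
        rw [hw]
        exact qadd_qstar_self a
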